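/- arXiv:0911.3725 — 3 statements merged into one kernel-verified Lean document; each statement's English description precedes it below -/
import Mathlib

section
/- Let Y be a topological space that is the union of two closed subsets Y₁ and Y₂, each of which has a countable basis for its topology. Then Y has a countable basis for its topology; indeed, the sets U₁ \ Y₂ for U₁ in a countable basis of Y₁, U₂ \ Y₁ for U₂ in a countable basis of Y₂, and the interiors (in Y) of U₁ ∪ U₂, together form a countable basis of Y. -/
/-!
A point outside `Y₂` lies in the open set `Y₂ᶜ ⊆ Y₁`, where basic sets `U₁ \ Y₂` of `Y₁`
are open in `Y`; symmetrically outside `Y₁`. At a point `y ∈ Y₁ ∩ Y₂`, write basic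
neighbourhoods as `U₁ = Y₁ ∩ V₁` and `U₂ = Y₂ ∩ V₂` with `V₁`, `V₂` open in `Y`; since
`Y₁ ∪ Y₂ = Y`, the open set `V₁ ∩ V₂ ∋ y` lies in `U₁ ∪ U₂`, so `y` is in its interior.
-/

open Set TopologicalSpace

section UnionOfTwoSubspaces

variable {X : Type*} [TopologicalSpace X] {s t : Set X}

theorem isOpen_image_val_diff_of_union_eq_univ (ht : IsClosed t) (hst : s ∪ t = univ)
    {U : Set s} (hU : IsOpen U) : IsOpen (Subtype.val '' U \ t) := by
  obtain ⟨V, hV, rfl⟩ := isOpen_induced_iff.mp hU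
  have hcompl : tᶜ ⊆ s := fun x hx => (hst ▸ mem_univ x : x ∈ s ∪ t).resolve_right hx
  have : Subtype.val '' (Subtype.val ⁻¹' V : Set s) \ t = V ∩ tᶜ := by
    rw [Subtype.image_preimage_coe]
    ext x
    exact ⟨fun ⟨⟨_, hxV⟩, hxt⟩ => ⟨hxV, hxt⟩, fun ⟨hxV, hxt⟩ => ⟨⟨hcompl hxt, hxV⟩, hxt⟩⟩
  rw [this]
  exact hV.inter ht.isOpen_compl

theorem image_val_inter_subset_interior_union (hst : s ∪ t = univ)
    {U : Set s} {V : Set t} (hU : IsOpen U) (hV : IsOpen V) :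
    Subtype.val '' U ∩ Subtype.val '' V ⊆ interior (Subtype.val '' U ∪ Subtype.val '' V) := by
  obtain ⟨U', hU', rfl⟩ := isOpen_induced_iff.mp hU
  obtain ⟨V', hV', rfl⟩ := isOpen_induced_iff.mp hV
  simp only [Subtype.image_preimage_coe]
  have hUV : U' ∩ V' ⊆ s ∩ U' ∪ t ∩ V' := fun x ⟨hxU, hxV⟩ =>
    (hst ▸ mem_univ x : x ∈ s ∪ t).imp (fun hxs => ⟨hxs, hxU⟩) (fun hxt => ⟨hxt, hxV⟩)
  exact fun x ⟨⟨_, hxU⟩, ⟨_, hxV⟩⟩ =>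
    mem_interior.mpr ⟨U' ∩ V', hUV, hU'.inter hV', hxU, hxV⟩

theorem TopologicalSpace.IsTopologicalBasis.exists_mem_image_val_subset {b : Set (Set s)}
    (hb : IsTopologicalBasis b) {W : Set X} (hW : IsOpen W) {x : X} (hxs : x ∈ s)
    (hxW : x ∈ W) : ∃ U ∈ b, x ∈ Subtype.val '' U ∧ Subtype.val '' U ⊆ W := by
  obtain ⟨U, hUb, hxU, hUW⟩ := hb.exists_subset_of_mem_open
    (show (⟨x, hxs⟩ : s) ∈ Subtype.val ⁻¹' W from hxW) (hW.preimage continuous_subtype_val)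
  exact ⟨U, hUb, ⟨_, hxU, rfl⟩, image_subset_iff.mpr hUW⟩

theorem isTopologicalBasis_of_union_eq_univ_of_isClosed (hs : IsClosed s) (ht : IsClosed t)
    (hst : s ∪ t = univ) {b₁ : Set (Set s)} {b₂ : Set (Set t)}
    (hb₁ : IsTopologicalBasis b₁) (hb₂ : IsTopologicalBasis b₂) :
    IsTopologicalBasis
      ((fun U₁ : Set s => (Subtype.val '' U₁) \ t) '' b₁ ∪
       (fun U₂ : Set t => (Subtype.val '' U₂) \ s) '' b₂ ∪
       (fun p : Set s × Set t =>
          interior ((Subtype.val '' p.1) ∪ (Subtype.val '' p.2))) '' (b₁ ×ˢ b₂)) := by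
  have hts : t ∪ s = univ := union_comm t s ▸ hst
  refine isTopologicalBasis_of_isOpen_of_nhds ?_ fun x W hxW hW => ?_
  · rintro _ ((⟨U₁, hU₁, rfl⟩ | ⟨U₂, hU₂, rfl⟩) | ⟨p, -, rfl⟩)
    · exact isOpen_image_val_diff_of_union_eq_univ ht hst (hb₁.isOpen hU₁)
    · exact isOpen_image_val_diff_of_union_eq_univ hs hts (hb₂.isOpen hU₂)
    · exact isOpen_interior
  by_cases hxt : x ∈ t
  · obtain ⟨U₂, hU₂b, hxU₂, hU₂W⟩ := hb₂.exists_mem_image_val_subset hW hxt hxW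
    by_cases hxs : x ∈ s
    · obtain ⟨U₁, hU₁b, hxU₁, hU₁W⟩ := hb₁.exists_mem_image_val_subset hW hxs hxW
      refine ⟨_, mem_union_right _ ⟨(U₁, U₂), ⟨hU₁b, hU₂b⟩, rfl⟩, ?_,
        interior_subset.trans (union_subset hU₁W hU₂W)⟩
      exact image_val_inter_subset_interior_union hst (hb₁.isOpen hU₁b) (hb₂.isOpen hU₂b)
        ⟨hxU₁, hxU₂⟩
    · exact ⟨_, mem_union_left _ (mem_union_right _ ⟨U₂, hU₂b, rfl⟩), ⟨hxU₂, hxs⟩,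
        sdiff_subset.trans hU₂W⟩
  · have hxs : x ∈ s := (hst ▸ mem_univ x : x ∈ s ∪ t).resolve_right hxt
    obtain ⟨U₁, hU₁b, hxU₁, hU₁W⟩ := hb₁.exists_mem_image_val_subset hW hxs hxW
    exact ⟨_, mem_union_left _ (mem_union_left _ ⟨U₁, hU₁b, rfl⟩), ⟨hxU₁, hxt⟩,
      sdiff_subset.trans hU₁W⟩

end UnionOfTwoSubspaces

/-- Let Y be a topological space which is the union of two closed subsets Y₁ and Y₂, each
second countable in the subspace topology. Then Y is second countable; indeed, given
countable bases B₁ of Y₁ and B₂ of Y₂, the sets U₁ \ Y₂ (U₁ ∈ B₁), U₂ \ Y₁ (U₂ ∈ B₂) and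
the interiors in Y of the unions U₁ ∪ U₂ form a countable basis of Y. -/
theorem stmt_0 {Y : Type*} [TopologicalSpace Y] (Y₁ Y₂ : Set Y)
    (h1 : IsClosed Y₁) (h2 : IsClosed Y₂) (hU : Y₁ ∪ Y₂ = univ)
    (B₁ : Set (Set ↥Y₁)) (B₂ : Set (Set ↥Y₂))
    (hB₁ : B₁.Countable) (hB₂ : B₂.Countable)
    (hb₁ : IsTopologicalBasis B₁) (hb₂ : IsTopologicalBasis B₂) :
    SecondCountableTopology Y ∧
    IsTopologicalBasis
      ((fun U₁ : Set ↥Y₁ => (Subtype.val '' U₁) \ Y₂) '' B₁ ∪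
       (fun U₂ : Set ↥Y₂ => (Subtype.val '' U₂) \ Y₁) '' B₂ ∪
       (fun p : Set ↥Y₁ × Set ↥Y₂ =>
          interior ((Subtype.val '' p.1) ∪ (Subtype.val '' p.2))) '' (B₁ ×ˢ B₂)) := by
  have hbasis := isTopologicalBasis_of_union_eq_univ_of_isClosed h1 h2 hU hb₁ hb₂
  refine ⟨hbasis.secondCountableTopology ?_, hbasis⟩
  exact ((hB₁.image _).union (hB₂.image _)).union ((hB₁.prod hB₂).image _)
end

section
/- Let M be a topological space, Z ⊆ M closed, and suppose there exists a homotopy H : M × [0,1] → M with H₀ = id_M and H_t(M) ⊆ M \ Z for all t > 0. If M is contractible, then M \ Z is contractible. -/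
/-!
Let `r = H₁ : M → M \ Z`. Since `Hₜ` maps `M \ Z` into itself for every `t`, `H` restricts to a
homotopy in `M \ Z` from the identity to `r ∘ i`, where `i` is the inclusion. Thus `M \ Z` is
dominated by the contractible space `M`: `id ≃ r ∘ i = r ∘ id_M ∘ i ≃ r ∘ const ∘ i`, a constant map.
-/

open unitInterval

theorem ContractibleSpace.of_id_homotopic_comp {X Y : Type*} [TopologicalSpace X]
    [TopologicalSpace Y] [ContractibleSpace Y] (i : C(X, Y)) (r : C(Y, X))
    (h : (ContinuousMap.id X).Homotopic (r.comp i)) : ContractibleSpace X := by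
  obtain ⟨y, hy⟩ := id_nullhomotopic Y
  rw [contractible_iff_id_nullhomotopic]
  exact ⟨r y, h.trans ((ContinuousMap.Homotopic.refl r).comp
    (hy.comp (ContinuousMap.Homotopic.refl i)))⟩

theorem ContractibleSpace.of_deformation_into {M : Type*} [TopologicalSpace M]
    [ContractibleSpace M] {s : Set M} (H : C(M × I, M)) (h0 : ∀ x ∈ s, H (x, 0) = x)
    (h1 : ∀ x, H (x, 1) ∈ s) (hs : ∀ x ∈ s, ∀ t, H (x, t) ∈ s) : ContractibleSpace s := by
  let r : C(M, s) := ⟨fun x ↦ ⟨H (x, 1), h1 x⟩, by fun_prop⟩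
  refine .of_id_homotopic_comp ⟨Subtype.val, continuous_subtype_val⟩ r
    ⟨{ toFun := fun q ↦ ⟨H (q.2, q.1), hs _ q.2.2 q.1⟩
       continuous_toFun := by fun_prop
       map_zero_left := fun x ↦ Subtype.ext (h0 x x.2)
       map_one_left := fun _ ↦ rfl }⟩

theorem stmt_12_general {M : Type*} [TopologicalSpace M] (Z : Set M)
    (H : C(M × I, M))
    (h0 : ∀ x : M, H (x, 0) = x)
    (ht : ∀ (x : M) (t : I), 0 < (t : ℝ) → H (x, t) ∉ Z)
    (hM : ContractibleSpace M) :
    ContractibleSpace ↥(Zᶜ) := by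
  refine .of_deformation_into H (fun x _ ↦ h0 x) (fun x ↦ ht x 1 one_pos) fun x hx t ↦ ?_
  rcases t.2.1.eq_or_lt with ht0 | htpos
  · rwa [show t = 0 from Subtype.ext ht0.symm, h0]
  · exact ht x t htpos

open unitInterval in
/-- Let M be a topological space, Z ⊆ M closed, and suppose there exists a homotopy
H : M × [0,1] → M with H₀ = id and H_t(M) ⊆ M \ Z for all t > 0. If M is contractible,
then M \ Z is contractible. -/
theorem stmt_12 {M : Type*} [TopologicalSpace M] (Z : Set M) (hZ : IsClosed Z)
    (H : C(M × I, M))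
    (h0 : ∀ x : M, H (x, 0) = x)
    (ht : ∀ (x : M) (t : I), 0 < (t : ℝ) → H (x, t) ∉ Z)
    (hM : ContractibleSpace M) :
    ContractibleSpace ↥(Zᶜ) :=
  stmt_12_general Z H h0 ht hM
end

section
/- Suppose a functor-like assignment f ↦ f̄ extends continuous G-equivariant maps f : X → Y between locally compact cocompact proper G-spaces to maps f̄ : X ∪ ∂G → Y ∪ ∂G by the identity on ∂G, where the topology on X ∪ ∂G has neighborhoods of z ∈ ∂G of the form (U ∩ ∂G) ∪ (U ∩ G)·K for U an open neighborhood of z in Ḡ and K a compact subset with G·K = X (where G·K uses a fixed orbit identification). Then f̄ is continuous. -/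
open Set Pointwise

/-- The compactification topology on `X ∪ ∂G` for a cocompact proper `G`-space `X`, where
`∂G` is the boundary of `G` inside a compactification `Ḡ` (given by a map `ι : G → Ḡ`):
it is generated by the open subsets of `X` together with the sets
`(U ∩ ∂G) ∪ (U ∩ G)·K`, for `U` open in `Ḡ` and `K` compact with `G·K = X`. -/
def compactificationTopology {Γ : Type*} [Group Γ] {Gbar : Type*} [TopologicalSpace Gbar]
    (ι : Γ → Gbar) (X : Type*) [TopologicalSpace X] [MulAction Γ X] :
    TopologicalSpace (X ⊕ {z : Gbar // z ∉ Set.range ι}) :=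
  TopologicalSpace.generateFrom
    ({s | ∃ O : Set X, IsOpen O ∧ s = Sum.inl '' O} ∪
     {s | ∃ (U : Set Gbar) (K : Set X), IsOpen U ∧ IsCompact K ∧
        (⋃ g : Γ, g • K) = Set.univ ∧
        s = Sum.inl '' (⋃ g ∈ {g : Γ | ι g ∈ U}, g • K) ∪
            Sum.inr '' {z : {z : Gbar // z ∉ Set.range ι} | (z : Gbar) ∈ U}})

/-!
By equivariance, a basic set `(U ∩ ∂G) ∪ (U ∩ G)·K` of `Ȳ` pulls back along `f̄` to a set
containing `(U ∩ ∂G) ∪ (U ∩ G)·L` for every compact `L ⊆ f⁻¹(K)` with `G·L = X`. Such an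
`L` exists: if `K₀` is a compact fundamental set of `X`, properness of `Y` lets finitely
many translates of `K` cover `f(K₀)`, and the corresponding pieces of the translates of
`K₀` form `L`. Adding one point to `L` keeps it compact, so every point of the preimage
lies in a basic open set inside the preimage.
-/

open Topology

section CompactificationTopology

variable {Γ : Type*} [Group Γ] {Gbar : Type*} (ι : Γ → Gbar) {X Y : Type*}
  [MulAction Γ X] [MulAction Γ Y]

def boundaryNbhd (U : Set Gbar) (K : Set X) : Set (X ⊕ {z : Gbar // z ∉ range ι}) :=
  Sum.inl '' (⋃ g ∈ {g : Γ | ι g ∈ U}, g • K) ∪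
    Sum.inr '' {z : {z : Gbar // z ∉ range ι} | (z : Gbar) ∈ U}

theorem isOpen_inl_image_compactificationTopology [TopologicalSpace Gbar] [TopologicalSpace X]
    {O : Set X} (hO : IsOpen O) :
    IsOpen[compactificationTopology ι X] (Sum.inl '' O) :=
  .basic _ (.inl ⟨O, hO, rfl⟩)

theorem isOpen_boundaryNbhd [TopologicalSpace Gbar] [TopologicalSpace X] {U : Set Gbar}
    {K : Set X} (hU : IsOpen U) (hK : IsCompact K) (hKcov : ⋃ g : Γ, g • K = univ) :
    IsOpen[compactificationTopology ι X] (boundaryNbhd ι U K) :=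
  .basic _ (.inr ⟨U, K, hU, hK, hKcov, rfl⟩)

theorem boundaryNbhd_subset_preimage_sumMap {f : X → Y}
    (hequiv : ∀ (g : Γ) x, f (g • x) = g • f x) (U : Set Gbar) {K : Set Y} {L : Set X}
    (hL : L ⊆ f ⁻¹' K) :
    boundaryNbhd ι U L ⊆ Sum.map f id ⁻¹' boundaryNbhd ι U K := by
  rintro _ (⟨x, hx, rfl⟩ | ⟨z, hz, rfl⟩)
  · obtain ⟨g, hg, hx⟩ := mem_iUnion₂.1 hx
    refine .inl ⟨f x, mem_biUnion hg ?_, rfl⟩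
    rw [mem_smul_set_iff_inv_smul_mem, ← hequiv]
    exact hL (mem_smul_set_iff_inv_smul_mem.1 hx)
  · exact .inr ⟨z, hz, rfl⟩

theorem exists_isCompact_subset_preimage_iUnion_smul_eq_univ [TopologicalSpace X]
    [TopologicalSpace Y] [T2Space Y]
    [ContinuousConstSMul Γ X] {f : X → Y} (hf : Continuous f)
    (hequiv : ∀ (g : Γ) x, f (g • x) = g • f x) {K₀ : Set X} (hK₀ : IsCompact K₀)
    (hK₀cov : ⋃ g : Γ, g • K₀ = univ) {K : Set Y} (hK : IsCompact K)
    (hKcov : ⋃ g : Γ, g • K = univ)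
    (hfin : {g : Γ | (g • K ∩ f '' K₀).Nonempty}.Finite) :
    ∃ L : Set X, IsCompact L ∧ L ⊆ f ⁻¹' K ∧ ⋃ g : Γ, g • L = univ := by
  refine ⟨⋃ g ∈ {g : Γ | (g • K ∩ f '' K₀).Nonempty}, g⁻¹ • K₀ ∩ f ⁻¹' K,
    hfin.isCompact_biUnion fun g _ ↦ (hK₀.smul g⁻¹).inter_right (hK.isClosed.preimage hf),
    iUnion₂_subset fun _ _ ↦ inter_subset_right, eq_univ_of_forall fun x ↦ ?_⟩
  obtain ⟨h, hx⟩ := mem_iUnion.1 (hK₀cov ▸ mem_univ x)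
  obtain ⟨g, hg⟩ := mem_iUnion.1 (hKcov ▸ mem_univ (f (h⁻¹ • x)))
  have hx : h⁻¹ • x ∈ K₀ := mem_smul_set_iff_inv_smul_mem.1 hx
  have hg' : g⁻¹ • f (h⁻¹ • x) ∈ K := mem_smul_set_iff_inv_smul_mem.1 hg
  refine mem_iUnion.2 ⟨h * g, mem_smul_set_iff_inv_smul_mem.2 ?_⟩
  rw [mul_inv_rev, mul_smul]
  exact mem_biUnion ⟨_, hg, h⁻¹ • x, hx, rfl⟩
    ⟨⟨h⁻¹ • x, hx, rfl⟩, by rwa [mem_preimage, hequiv]⟩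

theorem isOpen_preimage_sumMap_boundaryNbhd [TopologicalSpace Gbar] [TopologicalSpace X]
    {f : X → Y} (hequiv : ∀ (g : Γ) x, f (g • x) = g • f x) {U : Set Gbar} (hU : IsOpen U)
    {K : Set Y} {L : Set X} (hL : IsCompact L) (hLK : L ⊆ f ⁻¹' K)
    (hLcov : ⋃ g : Γ, g • L = univ) :
    IsOpen[compactificationTopology ι X] (Sum.map f id ⁻¹' boundaryNbhd ι U K) := by
  refine (@isOpen_iff_forall_mem_open _ (compactificationTopology ι X) _).2 ?_
  rintro (x | z) hp
  · obtain ⟨g, hg, hx⟩ : ∃ g, ι g ∈ U ∧ f x ∈ g • K := by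
      simpa [boundaryNbhd] using hp
    have hxK : g⁻¹ • x ∈ f ⁻¹' K := by
      rw [mem_preimage, hequiv]
      exact mem_smul_set_iff_inv_smul_mem.1 hx
    have hcov : ⋃ h : Γ, h • insert (g⁻¹ • x) L = univ :=
      univ_subset_iff.1 (hLcov ▸ iUnion_mono fun _ ↦ smul_set_mono (subset_insert _ _))
    exact ⟨boundaryNbhd ι U (insert (g⁻¹ • x) L),
      boundaryNbhd_subset_preimage_sumMap ι hequiv U (insert_subset hxK hLK),
      isOpen_boundaryNbhd ι hU (hL.insert _) hcov,
      .inl ⟨x, mem_biUnion hg (mem_smul_set_iff_inv_smul_mem.2 (mem_insert _ _)), rfl⟩⟩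
  · have hz : (z : Gbar) ∈ U := by simpa [boundaryNbhd] using hp
    exact ⟨boundaryNbhd ι U L, boundaryNbhd_subset_preimage_sumMap ι hequiv U hLK,
      isOpen_boundaryNbhd ι hU hL hLcov, .inr ⟨z, hz, rfl⟩⟩

end CompactificationTopology

theorem stmt_13_general {Γ : Type*} [Group Γ] {Gbar : Type*} [TopologicalSpace Gbar]
    (ι : Γ → Gbar)
    (X Y : Type*) [TopologicalSpace X] [TopologicalSpace Y]
    [T2Space Y]
    [MulAction Γ X] [MulAction Γ Y] [ContinuousConstSMul Γ X]
    (hcocptX : ∃ K : Set X, IsCompact K ∧ (⋃ g : Γ, g • K) = Set.univ)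
    (hproperY : ∀ K K' : Set Y, IsCompact K → IsCompact K' →
      {g : Γ | (g • K ∩ K').Nonempty}.Finite)
    (f : C(X, Y)) (hequiv : ∀ (g : Γ) (x : X), f (g • x) = g • f x) :
    @Continuous _ _ (compactificationTopology ι X) (compactificationTopology ι Y)
      (Sum.map f id) := by
  obtain ⟨K₀, hK₀, hK₀cov⟩ := hcocptX
  refine continuous_generateFrom_iff.mpr ?_
  rintro s (⟨O, hO, rfl⟩ | ⟨U, K, hU, hK, hKcov, rfl⟩)
  · have hpre : Sum.map f id ⁻¹' (Sum.inl '' O) =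
        (Sum.inl '' (f ⁻¹' O) : Set (X ⊕ {z : Gbar // z ∉ range ι})) := by
      ext (x | z) <;> simp
    rw [hpre]
    exact isOpen_inl_image_compactificationTopology ι (hO.preimage f.continuous)
  · change IsOpen[compactificationTopology ι X] (Sum.map f id ⁻¹' boundaryNbhd ι U K)
    obtain ⟨L, hL, hLK, hLcov⟩ := exists_isCompact_subset_preimage_iUnion_smul_eq_univ
      f.continuous hequiv hK₀ hK₀cov hK hKcov (hproperY K _ hK (hK₀.image f.continuous))
    exact isOpen_preimage_sumMap_boundaryNbhd ι hequiv hU hL hLK hLcov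

/-- Let G be a (hyperbolic) group with compactification Ḡ = G ∪ ∂G whose left translation
action is small at infinity, and let X, Y be locally compact spaces with cocompact proper
continuous G-actions. Any continuous G-equivariant map f : X → Y extends, by the identity
on ∂G, to a continuous map f̄ : X ∪ ∂G → Y ∪ ∂G for the compactification topologies. -/
theorem stmt_13 {Γ : Type*} [Group Γ] {Gbar : Type*} [TopologicalSpace Gbar]
    [CompactSpace Gbar] (ι : Γ → Gbar) (hinj : Function.Injective ι)
    (hdense : Dense (Set.range ι))
    (hsmall : ∀ z ∉ Set.range ι, ∀ K : Set Γ, K.Finite → ∀ U ∈ nhds z,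
      ∃ V ∈ nhds z, V ⊆ U ∧
        ∀ g : Γ, (∃ k ∈ K, ι (g * k) ∈ V) → ∀ k ∈ K, ι (g * k) ∈ U)
    (X Y : Type*) [TopologicalSpace X] [TopologicalSpace Y]
    [T2Space X] [T2Space Y] [LocallyCompactSpace X] [LocallyCompactSpace Y]
    [MulAction Γ X] [MulAction Γ Y] [ContinuousConstSMul Γ X] [ContinuousConstSMul Γ Y]
    (hcocptX : ∃ K : Set X, IsCompact K ∧ (⋃ g : Γ, g • K) = Set.univ)
    (hcocptY : ∃ K : Set Y, IsCompact K ∧ (⋃ g : Γ, g • K) = Set.univ)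
    (hproperX : ∀ K K' : Set X, IsCompact K → IsCompact K' →
      {g : Γ | (g • K ∩ K').Nonempty}.Finite)
    (hproperY : ∀ K K' : Set Y, IsCompact K → IsCompact K' →
      {g : Γ | (g • K ∩ K').Nonempty}.Finite)
    (f : C(X, Y)) (hequiv : ∀ (g : Γ) (x : X), f (g • x) = g • f x) :
    @Continuous _ _ (compactificationTopology ι X) (compactificationTopology ι Y)
      (Sum.map f id) :=
  stmt_13_general ι X Y hcocptX hproperY f hequiv
end
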